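/- Let F be a field of characteristic zero, V a finite-dimensional F-vector space, and Q a nondegenerate quadratic form on V. Suppose g and h are units of C(V) which both lie in GPin(V) (their twisted conjugations preserve ι(V)), are both unipotent (g − 1 and h − 1 are nilpotent elements of C(V)), and induce the same twisted conjugation on V: α(g)·ι(v)·g⁻¹ = α(h)·ι(v)·h⁻¹ for all v ∈ V. Then g = h. In other words, the restriction of the canonical projection P : GPin(V) → O(V) to the set of unipotent elements is injective. -/

import Mathlib

/-! If `g` and `h` induce the same twisted conjugation, then `k = h⁻¹ g` satisfies
`α(k) ι(v) = ι(v) k` for all `v`. Comparing with `ι(v) x = α(x) ι(v) + B(v, ·) ⌋ x` shows that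
every contraction of `k` vanishes, `B` being nondegenerate. In characteristic zero this forces `k`
to be a scalar `c`: transported to the exterior algebra by the symbol map, `k` is killed by the
number operator `∑ eᵢ ∧ (eᵢ* ⌋ ·)`, which acts on `⋀ⁿ V` as multiplication by `n`. Finally `g = c h`
with `g` and `h` unipotent makes `c - 1` nilpotent in `F`, so `c = 1`. -/

open CliffordAlgebra

theorem DirectSum.mem_zero_of_apply_eq_zero_of_eq_natCast_smul {F A : Type*} [Field F]
    [CharZero F] [AddCommGroup A] [Module F A] (𝒜 : ℕ → Submodule F A) [DirectSum.Decomposition 𝒜]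
    (f : A →ₗ[F] A) (hf : ∀ n, ∀ x ∈ 𝒜 n, f x = (n : F) • x) {x : A} (hx : f x = 0) :
    x ∈ 𝒜 0 := by
  have hcomp : ∀ j (y : A), (decompose 𝒜 (f y) j : A) = (j : F) • (decompose 𝒜 y j : A) := by
    intro j y
    induction y using DirectSum.Decomposition.inductionOn 𝒜 with
    | zero => simp
    | @homogeneous i m =>
      rw [hf i m m.2, decompose_smul, decompose_coe]
      obtain rfl | hij := eq_or_ne i j
      · rfl
      · simp [DirectSum.smul_apply, DirectSum.of_eq_of_ne _ _ _ hij.symm]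
    | add y z hy hz => simp [hy, hz, smul_add]
  have hvanish : ∀ j, j ≠ 0 → decompose 𝒜 x j = 0 := by
    intro j hj
    have := hcomp j x
    rw [hx, decompose_zero, zero_apply, Submodule.coe_zero, eq_comm, smul_eq_zero] at this
    exact Subtype.ext (this.resolve_left (Nat.cast_ne_zero.mpr hj))
  have hx0 : decompose 𝒜 x = DirectSum.of _ 0 (decompose 𝒜 x 0) := by
    ext j : 1
    obtain rfl | hj := eq_or_ne j 0
    · rw [DirectSum.of_eq_same]
    · rw [DirectSum.of_eq_of_ne _ _ _ hj, hvanish j hj]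
  rw [← decompose_coe, (decompose 𝒜).apply_eq_iff_eq] at hx0
  exact hx0 ▸ (decompose 𝒜 x 0).2

namespace ExteriorAlgebra

variable {R M κ : Type*} [CommRing R] [AddCommGroup M] [Module R M] [Fintype κ]

noncomputable def numberOperator (b : Module.Basis κ R M) :
    ExteriorAlgebra R M →ₗ[R] ExteriorAlgebra R M :=
  ∑ i, LinearMap.mulLeft R (ι R (b i)) ∘ₗ contractLeft (b.coord i)

theorem numberOperator_apply (b : Module.Basis κ R M) (x : ExteriorAlgebra R M) :
    numberOperator b x = ∑ i, ι R (b i) * contractLeft (b.coord i) x := by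
  simp [numberOperator, LinearMap.sum_apply]

theorem numberOperator_ι_mul (b : Module.Basis κ R M) (v : M) (x : ExteriorAlgebra R M) :
    numberOperator b (ι R v * x) = ι R v * x + ι R v * numberOperator b x := by
  have hv : ∑ i, b.coord i v • ι R (b i) = ι R v := by
    simp_rw [← map_smul, ← map_sum, Module.Basis.coord_apply, b.sum_repr]
  simp only [numberOperator_apply, contractLeft_ι_mul, mul_sub, mul_smul_comm,
    Finset.sum_sub_distrib, Finset.mul_sum, ← mul_assoc, ← smul_mul_assoc, ← Finset.sum_mul, hv]
  rw [sub_eq_add_neg, ← Finset.sum_neg_distrib]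
  congr 1
  refine Finset.sum_congr rfl fun i _ => ?_
  rw [← neg_mul]
  exact congrArg (· * _) (neg_eq_of_add_eq_zero_right (ι_add_mul_swap (R := R) (b i) v))

theorem numberOperator_apply_of_mem (b : Module.Basis κ R M) {n : ℕ} {x : ExteriorAlgebra R M}
    (hx : x ∈ ⋀[R]^n M) : numberOperator b x = (n : R) • x := by
  induction hx using Submodule.pow_induction_on_left' with
  | algebraMap r => simp [numberOperator_apply, contractLeft_algebraMap]
  | add x y i _ _ ihx ihy => rw [map_add, ihx, ihy, smul_add]
  | mem_mul m hm k x _ ih =>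
    obtain ⟨v, rfl⟩ := hm
    rw [numberOperator_ι_mul, ih, mul_smul_comm, Nat.cast_succ, add_smul, one_smul, add_comm]

end ExteriorAlgebra

namespace CliffordAlgebra

variable {R M : Type*} [CommRing R] [AddCommGroup M] [Module R M] {Q : QuadraticForm R M}

theorem contractLeft_mul (d : Module.Dual R M) (a b : CliffordAlgebra Q) :
    contractLeft d (a * b) = contractLeft d a * b + involute a * contractLeft d b := by
  induction a using CliffordAlgebra.induction generalizing b with
  | algebraMap r =>
    simp [Algebra.algebraMap_eq_smul_one, map_smul, contractLeft_one]
  | ι m =>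
    rw [contractLeft_ι_mul, contractLeft_ι, involute_ι, Algebra.smul_def, neg_mul, sub_eq_add_neg]
  | mul x y hx hy =>
    simp only [mul_assoc, hx, hy, map_mul]
    noncomm_ring
  | add x y hx hy =>
    rw [add_mul, map_add, hx, hy, map_add, map_add]
    noncomm_ring

theorem ι_mul_eq_involute_mul_ι_add_contractLeft (v : M) (x : CliffordAlgebra Q) :
    ι Q v * x = involute x * ι Q v + contractLeft (Q.polarBilin v) x := by
  induction x using CliffordAlgebra.induction with
  | algebraMap r =>
    rw [contractLeft_algebraMap, add_zero, involute.commutes]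
    exact (Algebra.commutes r _).symm
  | ι w =>
    rw [involute_ι, contractLeft_ι, neg_mul, QuadraticMap.polarBilin_apply_apply,
      QuadraticMap.polar_comm, ← ι_mul_ι_add_swap]
    abel
  | mul a b ha hb =>
    rw [← mul_assoc, ha, add_mul, mul_assoc, hb, contractLeft_mul, map_mul]
    noncomm_ring
  | add a b ha hb =>
    rw [mul_add, ha, hb, map_add, map_add, add_mul]
    abel

end CliffordAlgebra

section CharZero

variable {F V : Type*} [Field F] [CharZero F] [AddCommGroup V] [Module F V]
  [FiniteDimensional F V]

theorem ExteriorAlgebra.exists_algebraMap_eq_of_forall_contractLeft_eq_zero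
    {x : ExteriorAlgebra F V} (hx : ∀ d : Module.Dual F V, contractLeft d x = 0) :
    ∃ r : F, algebraMap F _ r = x := by
  let b := Module.finBasis F V
  have hx0 : x ∈ ⋀[F]^0 V :=
    DirectSum.mem_zero_of_apply_eq_zero_of_eq_natCast_smul _ (numberOperator b)
      (fun _ _ => numberOperator_apply_of_mem b) (by simp [numberOperator_apply, hx])
  rw [exteriorPower, pow_zero] at hx0
  exact Submodule.mem_one.mp hx0

theorem CliffordAlgebra.exists_algebraMap_eq_of_forall_contractLeft_eq_zero
    {Q : QuadraticForm F V} {x : CliffordAlgebra Q}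
    (hx : ∀ d : Module.Dual F V, contractLeft d x = 0) :
    ∃ r : F, algebraMap F _ r = x := by
  have : Invertible (2 : F) := invertibleOfNonzero two_ne_zero
  obtain ⟨r, hr⟩ := ExteriorAlgebra.exists_algebraMap_eq_of_forall_contractLeft_eq_zero
    (x := equivExterior Q x) fun d => by
      rw [equivExterior, changeFormEquiv_apply, ← changeForm_contractLeft, hx, map_zero]
  refine ⟨r, (equivExterior Q).injective ?_⟩
  rw [← hr, equivExterior, changeFormEquiv_apply, changeForm_algebraMap]

theorem CliffordAlgebra.exists_algebraMap_eq_of_involute_mul_ι_eq_ι_mul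
    {Q : QuadraticForm F V} (hQ : Q.polarBilin.Nondegenerate) {x : CliffordAlgebra Q}
    (hx : ∀ v, involute x * ι Q v = ι Q v * x) :
    ∃ r : F, algebraMap F _ r = x := by
  refine exists_algebraMap_eq_of_forall_contractLeft_eq_zero fun d => ?_
  obtain ⟨v, rfl⟩ := (LinearMap.BilinForm.toDual _ hQ).surjective d
  have := ι_mul_eq_involute_mul_ι_add_contractLeft v x
  rwa [← hx v, left_eq_add] at this

end CharZero

theorem eq_one_of_isNilpotent_algebraMap_mul_sub_one {F A : Type*} [Field F] [Ring A]
    [Algebra F A] [Nontrivial A] {c : F} {u : A} (hu : IsNilpotent (u - 1))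
    (hcu : IsNilpotent (algebraMap F A c * u - 1)) : c = 1 := by
  have hcu' : IsNilpotent (algebraMap F A c * u - algebraMap F A c) := by
    rw [← mul_sub_one]
    exact (Algebra.commute_algebraMap_left c _).isNilpotent_mul_left hu
  have hcomm : Commute (algebraMap F A c * u - 1) (algebraMap F A c * u - algebraMap F A c) :=
    ((Commute.refl _).sub_right (Algebra.commute_algebraMap_right c _)).sub_left
      (Commute.one_left _)
  have hscalar : IsNilpotent (algebraMap F A (c - 1)) := by
    rw [map_sub, map_one, ← sub_sub_sub_cancel_left _ _ (algebraMap F A c * u)]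
    exact hcomm.isNilpotent_sub hcu hcu'
  rw [IsNilpotent.map_iff (algebraMap F A).injective] at hscalar
  exact sub_eq_zero.mp hscalar.eq_zero

theorem projection_injective_on_unipotents_general
    {F V : Type*} [Field F] [CharZero F] [AddCommGroup V] [Module F V]
    [FiniteDimensional F V] (Q : QuadraticForm F V) (hQ : Q.polarBilin.Nondegenerate)
    (g h : (CliffordAlgebra Q)ˣ)
    (hgu : IsNilpotent ((g : CliffordAlgebra Q) - 1))
    (hhu : IsNilpotent ((h : CliffordAlgebra Q) - 1))
    (heq : ∀ v : V, involute (g : CliffordAlgebra Q) * ι Q v *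
          ((g⁻¹ : (CliffordAlgebra Q)ˣ) : CliffordAlgebra Q) =
        involute (h : CliffordAlgebra Q) * ι Q v *
          ((h⁻¹ : (CliffordAlgebra Q)ˣ) : CliffordAlgebra Q)) :
    g = h := by
  have htwisted :
      ∀ v, involute (↑(h⁻¹ * g) : CliffordAlgebra Q) * ι Q v = ι Q v * ↑(h⁻¹ * g) := by
    intro v
    calc involute (↑(h⁻¹ * g) : CliffordAlgebra Q) * ι Q v
        = involute ↑h⁻¹ * (involute ↑g * ι Q v * ↑g⁻¹) * ↑g := by
          simp only [Units.val_mul, map_mul, mul_assoc, Units.inv_mul, mul_one]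
      _ = ι Q v * ↑(h⁻¹ * g) := by
          rw [heq v, Units.val_mul, ← mul_assoc, ← mul_assoc, ← mul_assoc, ← map_mul,
            Units.inv_mul, map_one, one_mul, mul_assoc]
  obtain ⟨c, hc⟩ := exists_algebraMap_eq_of_involute_mul_ι_eq_ι_mul hQ htwisted
  have hgh : (g : CliffordAlgebra Q) = algebraMap F _ c * h := by
    rw [Algebra.commutes, hc, ← Units.val_mul, mul_inv_cancel_left]
  have : Nontrivial (CliffordAlgebra Q) :=
    have : Invertible (2 : F) := invertibleOfNonzero two_ne_zero
    inferInstance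
  obtain rfl : c = 1 := eq_one_of_isNilpotent_algebraMap_mul_sub_one hhu (hgh ▸ hgu)
  exact Units.ext (by rw [hgh, map_one, one_mul])

/-- Let `F` be a field of characteristic zero, `V` a finite-dimensional `F`-vector space, and
`Q` a nondegenerate quadratic form on `V`. Suppose `g` and `h` are units of `C(V)` which
both lie in `GPin(V)`, are both unipotent (`g - 1` and `h - 1` are nilpotent), and induce
the same twisted conjugation on `V`. Then `g = h`.  That is, the restriction of the
canonical projection `P : GPin(V) → O(V)` to the set of unipotent elements is injective. -/
theorem projection_injective_on_unipotents
    {F V : Type*} [Field F] [CharZero F] [AddCommGroup V] [Module F V]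
    [FiniteDimensional F V] (Q : QuadraticForm F V) (hQ : Q.polarBilin.Nondegenerate)
    (g h : (CliffordAlgebra Q)ˣ)
    (hg : (fun x => involute (g : CliffordAlgebra Q) * x *
        ((g⁻¹ : (CliffordAlgebra Q)ˣ) : CliffordAlgebra Q)) '' Set.range (ι Q) =
        Set.range (ι Q))
    (hh : (fun x => involute (h : CliffordAlgebra Q) * x *
        ((h⁻¹ : (CliffordAlgebra Q)ˣ) : CliffordAlgebra Q)) '' Set.range (ι Q) =
        Set.range (ι Q))
    (hgu : IsNilpotent ((g : CliffordAlgebra Q) - 1))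
    (hhu : IsNilpotent ((h : CliffordAlgebra Q) - 1))
    (heq : ∀ v : V, involute (g : CliffordAlgebra Q) * ι Q v *
          ((g⁻¹ : (CliffordAlgebra Q)ˣ) : CliffordAlgebra Q) =
        involute (h : CliffordAlgebra Q) * ι Q v *
          ((h⁻¹ : (CliffordAlgebra Q)ˣ) : CliffordAlgebra Q)) :
    g = h :=
  projection_injective_on_unipotents_general Q hQ g h hgu hhu heq
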